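/- Let G be a finite simple graph without isolated vertices, let k ≥ 2 and m ≥ 1 be integers, and let u, v be two new vertices. Let G̃ be the graph obtained by taking, for each edge e = xy of G, m copies of the gadget F_k in which the vertices u, v, x, y of F_k are identified with u, v and the endpoints x, y of e respectively, all gadget copies being otherwise pairwise disjoint. Let ψ_1 be the coloring of G̃ with ψ_1(u) = 1, ψ_1(v) = 2, ψ_1(w) = 1 for every vertex w of G, and coloring the remaining vertices of each gadget copy according to ψ. Then ψ_1 is a proper 3-coloring of G̃, and for every vertex cover B of G, ψ_1 is the unique proper 3-coloring of G̃ that agrees with ψ_1 on B ∪ {u, v}. -/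

import Mathlib

/-- The inner (non-boundary) vertices of the gadget graph `F_k`, i.e. the vertices of
`F_k` other than `u`, `v`, `x`, `y`: the vertices `z_1, …, z_5` (`z j` models
`z_{j+1}`), their primed copies (`z' j`), the vertices `y_1, …, y_k` (`Y i` models
`y_{i+1}`) and the vertices `x_{1,i}` (`p i`), `x_{2,i}` (`q i`) for `1 ≤ i ≤ k−1`. -/
inductive FInner (k : ℕ) : Type
  | z : Fin 5 → FInner k
  | z' : Fin 5 → FInner k
  | Y : Fin k → FInner k
  | p : Fin (k - 1) → FInner k
  | q : Fin (k - 1) → FInner k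

/-- The edges of `F_k` joining two inner vertices: the triangles `{z₁,z₂,z₃}`,
`{z₄,z₂,z₃}`, the edge `z₅z₄`, their primed copies, and for `1 ≤ i ≤ k−1` the edges of
the triangles `{yᵢ, x_{1,i}, x_{2,i}}`, `{y_{i+1}, x_{1,i}, x_{2,i}}`. -/
def FInnerRel (k : ℕ) : FInner k → FInner k → Prop
  | .z i, .z j =>
      ((i : ℕ) = 0 ∧ (j : ℕ) = 1) ∨ ((i : ℕ) = 0 ∧ (j : ℕ) = 2) ∨
      ((i : ℕ) = 1 ∧ (j : ℕ) = 2) ∨ ((i : ℕ) = 3 ∧ (j : ℕ) = 1) ∨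
      ((i : ℕ) = 3 ∧ (j : ℕ) = 2) ∨ ((i : ℕ) = 4 ∧ (j : ℕ) = 3)
  | .z' i, .z' j =>
      ((i : ℕ) = 0 ∧ (j : ℕ) = 1) ∨ ((i : ℕ) = 0 ∧ (j : ℕ) = 2) ∨
      ((i : ℕ) = 1 ∧ (j : ℕ) = 2) ∨ ((i : ℕ) = 3 ∧ (j : ℕ) = 1) ∨
      ((i : ℕ) = 3 ∧ (j : ℕ) = 2) ∨ ((i : ℕ) = 4 ∧ (j : ℕ) = 3)
  | .Y i, .p j => (i : ℕ) = (j : ℕ) ∨ (i : ℕ) = (j : ℕ) + 1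
  | .Y i, .q j => (i : ℕ) = (j : ℕ) ∨ (i : ℕ) = (j : ℕ) + 1
  | .p i, .q j => (i : ℕ) = (j : ℕ)
  | _, _ => False

/-- Inner vertices of `F_k` adjacent to the boundary vertex `u`: `z₃, z₅, z'₃, z'₅`
and the vertices `x_{1,i}`. -/
def uSide (k : ℕ) : FInner k → Prop
  | .z j => (j : ℕ) = 2 ∨ (j : ℕ) = 4
  | .z' j => (j : ℕ) = 2 ∨ (j : ℕ) = 4
  | .p _ => True
  | _ => False

/-- Inner vertices of `F_k` adjacent to the boundary vertex `x`: `z₁, z'₄, z'₅, y_k`. -/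
def xSide (k : ℕ) : FInner k → Prop
  | .z j => (j : ℕ) = 0
  | .z' j => (j : ℕ) = 3 ∨ (j : ℕ) = 4
  | .Y i => (i : ℕ) = k - 1
  | _ => False

/-- Inner vertices of `F_k` adjacent to the boundary vertex `y`: `z'₁, z₄, z₅, y_k`. -/
def ySide (k : ℕ) : FInner k → Prop
  | .z' j => (j : ℕ) = 0
  | .z j => (j : ℕ) = 3 ∨ (j : ℕ) = 4
  | .Y i => (i : ℕ) = k - 1
  | _ => False

/-- Inner vertices of `F_k` adjacent to the boundary vertex `v`: `z₁, z'₁, y_k`. -/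
def vSide (k : ℕ) : FInner k → Prop
  | .z j => (j : ℕ) = 0
  | .z' j => (j : ℕ) = 0
  | .Y i => (i : ℕ) = k - 1
  | _ => False

/-- The edges of `G`, each recorded once as an ordered pair `(a, b)` with `a < b`. -/
def OEdge {V : Type*} [LinearOrder V] (G : SimpleGraph V) : Type _ :=
  {e : V × V // G.Adj e.1 e.2 ∧ e.1 < e.2}

/-- The vertices of the graph `G̃`: the vertices of `G` together with the two new
vertices `u` (`Sum.inl (Sum.inr false)`) and `v` (`Sum.inl (Sum.inr true)`), and, for
each edge `e` of `G` and each copy index `c : Fin m`, a disjoint copy of the inner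
vertices of the gadget `F_k`. -/
abbrev TVert {V : Type*} [LinearOrder V] (G : SimpleGraph V) (k m : ℕ) : Type _ :=
  (V ⊕ Bool) ⊕ (OEdge G × Fin m × FInner k)

/-- The edge relation of `G̃`: within each gadget copy the inner edges of `F_k`, and
each inner vertex is joined to `u`, `v` and to the endpoints `x, y` of the
corresponding edge of `G` exactly as in `F_k` (the endpoint `x` of `F_k` being
identified with the smaller endpoint of the edge, `y` with the larger one; the gadget
`F_k` is symmetric in `x` and `y`). -/
def TRel {V : Type*} [LinearOrder V] (G : SimpleGraph V) (k m : ℕ) :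
    TVert G k m → TVert G k m → Prop
  | Sum.inl (Sum.inl w), Sum.inr (e, _, i) =>
      (w = e.1.1 ∧ xSide k i) ∨ (w = e.1.2 ∧ ySide k i)
  | Sum.inl (Sum.inr false), Sum.inr (_, _, i) => uSide k i
  | Sum.inl (Sum.inr true), Sum.inr (_, _, i) => vSide k i
  | Sum.inr (e, c, i), Sum.inr (e', c', i') => e = e' ∧ c = c' ∧ FInnerRel k i i'
  | _, _ => False

/-- The graph `G̃` obtained by attaching, for every edge `e = xy` of `G`, `m` copies
of the gadget `F_k` along `u`, `v` and the endpoints `x`, `y` of `e`. -/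
def Tgraph {V : Type*} [LinearOrder V] (G : SimpleGraph V) (k m : ℕ) :
    SimpleGraph (TVert G k m) :=
  SimpleGraph.fromRel (TRel G k m)

/-- The coloring `ψ` on the inner vertices of `F_k` (colors `1, 2, 3` are modelled as
`0, 1, 2 : Fin 3`): `ψ(z₁) = ψ(z'₁) = ψ(z₄) = ψ(z'₄) = 3`,
`ψ(z₅) = ψ(z'₅) = ψ(z₃) = ψ(z'₃) = 2`, `ψ(z₂) = ψ(z'₂) = 1`, `ψ(yᵢ) = 3`,
`ψ(x_{1,i}) = 2`, `ψ(x_{2,i}) = 1`. -/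
def ψI (k : ℕ) : FInner k → Fin 3
  | .z j => ![2, 0, 1, 2, 1] j
  | .z' j => ![2, 0, 1, 2, 1] j
  | .Y _ => 2
  | .p _ => 1
  | .q _ => 0

/-- The coloring `ψ₁` of `G̃`: `ψ₁(u) = 1`, `ψ₁(v) = 2`, `ψ₁(w) = 1` for every vertex
`w` of `G`, and each gadget copy is colored according to `ψ`. -/
def ψT {V : Type*} [LinearOrder V] (G : SimpleGraph V) (k m : ℕ) :
    TVert G k m → Fin 3
  | Sum.inl (Sum.inl _) => 0
  | Sum.inl (Sum.inr false) => 0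
  | Sum.inl (Sum.inr true) => 1
  | Sum.inr (_, _, i) => ψI k i

/-!
Fix a proper 3-colouring with `u ↦ 0` and `v ↦ 1`. In a gadget on the edge `xy`, if `x` gets
colour `0` then `z₁` gets `2`; `z₄` sees the same edge `z₂z₃` as `z₁`, so it also gets `2`, and
`z₅`, seeing `u` and `z₄`, gets `1`. Now `y` sees `z₄` and `z₅`, so it gets `0`; the primed half
gives the converse. Thus colour `0` spreads from the vertex cover `B` along every edge to all of
`G` (no isolated vertices, `m ≥ 1`), after which every gadget vertex is forced: consecutive `yᵢ`
see the same edge `x_{1,i}x_{2,i}`, so they all share the colour `2` of `y_k`, which sees `x`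
and `v`.
-/

lemma Fin.eq_of_ne_of_ne_three {a b c t : Fin 3} (hab : a ≠ b) (hac : a ≠ c) (hbc : b ≠ c)
    (htb : t ≠ b) (htc : t ≠ c) : t = a := by
  omega

namespace SimpleGraph.Coloring

variable {α : Type*} {H : SimpleGraph α} (C : H.Coloring (Fin 3))

lemma eq_of_adj_both {a b p q : α} (hpq : H.Adj p q) (hap : H.Adj a p) (haq : H.Adj a q)
    (hbp : H.Adj b p) (hbq : H.Adj b q) : C a = C b :=
  Fin.eq_of_ne_of_ne_three (C.valid hbp) (C.valid hbq) (C.valid hpq)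
    (C.valid hap) (C.valid haq)

lemma eq_third_of_adj {a p q : α} {i j l : Fin 3} (hp : H.Adj a p) (hq : H.Adj a q)
    (hCp : C p = i) (hCq : C q = j) (hli : l ≠ i := by decide) (hlj : l ≠ j := by decide)
    (hij : i ≠ j := by decide) : C a = l :=
  Fin.eq_of_ne_of_ne_three hli hlj hij (hCp ▸ C.valid hp) (hCq ▸ C.valid hq)

/-- `z j` plays the role of `z_{j+1}` in `F_k`, and `s`, `t` that of `x`, `y`. -/
lemma half_gadget_forced {u v s t : α} {z : Fin 5 → α}
    (hs : H.Adj (z 0) s) (hv : H.Adj (z 0) v) (h01 : H.Adj (z 0) (z 1))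
    (h02 : H.Adj (z 0) (z 2)) (h12 : H.Adj (z 1) (z 2)) (h31 : H.Adj (z 3) (z 1))
    (h32 : H.Adj (z 3) (z 2)) (h43 : H.Adj (z 4) (z 3)) (hu2 : H.Adj (z 2) u)
    (hu4 : H.Adj (z 4) u) (ht3 : H.Adj (z 3) t) (ht4 : H.Adj (z 4) t)
    (hCu : C u = 0) (hCv : C v = 1) (hCs : C s = 0) :
    C t = 0 ∧ ∀ j, C (z j) = ![2, 0, 1, 2, 1] j := by
  have hz0 : C (z 0) = 2 := C.eq_third_of_adj hs hv hCs hCv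
  have hz3 : C (z 3) = 2 := (C.eq_of_adj_both h12 h31 h32 h01 h02).trans hz0
  have hz4 : C (z 4) = 1 := C.eq_third_of_adj hu4 h43 hCu hz3
  have hz2 : C (z 2) = 1 := C.eq_third_of_adj hu2 h02.symm hCu hz0
  have hz1 : C (z 1) = 0 := C.eq_third_of_adj h12 h01.symm hz2 hz0
  refine ⟨C.eq_third_of_adj ht4.symm ht3.symm hz4 hz3, fun j => ?_⟩
  fin_cases j <;> assumption

end SimpleGraph.Coloring

section Gadget

variable {V : Type*} [LinearOrder V] {G : SimpleGraph V} {k m : ℕ}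

lemma ψI_ne_of_FInnerRel {i j : FInner k} (h : FInnerRel k i j) : ψI k i ≠ ψI k j := by
  cases i <;> cases j <;> simp only [FInnerRel] at h <;> simp only [ψI] <;>
    first | decide | (rename_i a b; fin_cases a <;> fin_cases b <;> simp_all)

lemma ψI_ne_zero_of_side {i : FInner k} (h : xSide k i ∨ ySide k i ∨ uSide k i) :
    ψI k i ≠ 0 := by
  cases i <;> simp [xSide, ySide, uSide] at h <;> simp only [ψI] <;>
    first | decide | (rename_i a; fin_cases a <;> simp_all)

lemma ψI_eq_two_of_vSide {i : FInner k} (h : vSide k i) : ψI k i = 2 := by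
  cases i <;> simp [vSide] at h <;> simp only [ψI] <;>
    first | rfl | (rename_i a; fin_cases a <;> simp_all)

lemma ψT_ne_of_TRel {p q : TVert G k m} (h : TRel G k m p q) : ψT G k m p ≠ ψT G k m q := by
  rcases p with (w | _ | _) | ⟨e, c, i⟩ <;> rcases q with (w' | _ | _) | ⟨e', c', i'⟩ <;>
    simp only [TRel] at h <;> simp only [ψT]
  · exact (ψI_ne_zero_of_side (by tauto)).symm
  · exact (ψI_ne_zero_of_side (by tauto)).symm
  · simp [ψI_eq_two_of_vSide h]
  · exact ψI_ne_of_FInnerRel h.2.2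

lemma ψT_adj_ne {p q : TVert G k m} (h : (Tgraph G k m).Adj p q) :
    ψT G k m p ≠ ψT G k m q := by
  obtain ⟨-, h | h⟩ := (SimpleGraph.fromRel_adj _ _ _).1 h
  exacts [ψT_ne_of_TRel h, (ψT_ne_of_TRel h).symm]

abbrev uVert : TVert G k m := Sum.inl (Sum.inr false)
abbrev vVert : TVert G k m := Sum.inl (Sum.inr true)
abbrev baseVert (w : V) : TVert G k m := Sum.inl (Sum.inl w)
abbrev innerVert (e : OEdge G) (c : Fin m) (i : FInner k) : TVert G k m := Sum.inr (e, c, i)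

lemma FInnerRel.ne {i j : FInner k} (h : FInnerRel k i j) : i ≠ j := by
  rintro rfl
  cases i <;> simp [FInnerRel] at h <;> omega

section Adj

variable {e : OEdge G} {c : Fin m} {i j : FInner k}

lemma tgraph_adj_inner (h : FInnerRel k i j) :
    (Tgraph G k m).Adj (innerVert e c i) (innerVert e c j) :=
  (SimpleGraph.fromRel_adj _ _ _).2 ⟨by simpa using h.ne, Or.inl ⟨rfl, rfl, h⟩⟩

lemma tgraph_adj_u (h : uSide k i) : (Tgraph G k m).Adj (innerVert e c i) uVert :=
  (SimpleGraph.fromRel_adj _ _ _).2 ⟨Sum.inr_ne_inl, Or.inr h⟩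

lemma tgraph_adj_v (h : vSide k i) : (Tgraph G k m).Adj (innerVert e c i) vVert :=
  (SimpleGraph.fromRel_adj _ _ _).2 ⟨Sum.inr_ne_inl, Or.inr h⟩

lemma tgraph_adj_fst (h : xSide k i) : (Tgraph G k m).Adj (innerVert e c i) (baseVert e.1.1) :=
  (SimpleGraph.fromRel_adj _ _ _).2 ⟨Sum.inr_ne_inl, Or.inr (Or.inl ⟨rfl, h⟩)⟩

end Adj

variable (C : (Tgraph G k m).Coloring (Fin 3))

lemma color_Y_eq (e : OEdge G) (c : Fin m) (i j : Fin k) :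
    C (innerVert e c (.Y i)) = C (innerVert e c (.Y j)) := by
  suffices h : ∀ n (hn : n < k),
      C (innerVert e c (.Y ⟨n, hn⟩)) = C (innerVert e c (.Y ⟨0, by omega⟩)) from
    (h i i.2).trans (h j j.2).symm
  intro n hn
  induction n with
  | zero => rfl
  | succ n ih =>
    have hn' : n < k - 1 := by omega
    refine (C.eq_of_adj_both (p := innerVert e c (.p ⟨n, hn'⟩))
      (q := innerVert e c (.q ⟨n, hn'⟩)) (tgraph_adj_inner rfl) ?_ ?_ ?_ ?_).trans
      (ih (by omega))
    all_goals exact tgraph_adj_inner (by simp [FInnerRel])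

variable {C} (e : OEdge G) (c : Fin m)

lemma z_half_forced (hu : C uVert = 0) (hv : C vVert = 1) (hx : C (baseVert e.1.1) = 0) :
    C (baseVert e.1.2) = 0 ∧ ∀ j, C (innerVert e c (.z j)) = ψI k (.z j) := by
  refine C.half_gadget_forced ?_ ?_ ?_ ?_ ?_ ?_ ?_ ?_ ?_ ?_ ?_ ?_ hu hv hx
  all_goals simp [Tgraph, TRel, FInnerRel, xSide, ySide, uSide, vSide]

lemma z'_half_forced (hu : C uVert = 0) (hv : C vVert = 1) (hy : C (baseVert e.1.2) = 0) :
    C (baseVert e.1.1) = 0 ∧ ∀ j, C (innerVert e c (.z' j)) = ψI k (.z' j) := by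
  refine C.half_gadget_forced ?_ ?_ ?_ ?_ ?_ ?_ ?_ ?_ ?_ ?_ ?_ ?_ hu hv hy
  all_goals simp [Tgraph, TRel, FInnerRel, xSide, ySide, uSide, vSide]

lemma ladder_forced (hu : C uVert = 0) (hv : C vVert = 1) (hx : C (baseVert e.1.1) = 0) :
    (∀ i, C (innerVert e c (.Y i)) = 2) ∧ (∀ i, C (innerVert e c (.p i)) = 1) ∧
      ∀ i, C (innerVert e c (.q i)) = 0 := by
  have hY (i : Fin k) : C (innerVert e c (.Y i)) = 2 :=
    (color_Y_eq C e c i ⟨k - 1, by have := i.isLt; omega⟩).trans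
      (C.eq_third_of_adj (tgraph_adj_fst rfl) (tgraph_adj_v rfl) hx hv)
  have hp (i : Fin (k - 1)) : C (innerVert e c (.p i)) = 1 :=
    C.eq_third_of_adj (tgraph_adj_u trivial)
      (tgraph_adj_inner (i := .Y ⟨i, by omega⟩) (j := .p i) (Or.inl rfl)).symm hu (hY _)
  refine ⟨hY, hp, fun i => C.eq_third_of_adj
      (tgraph_adj_inner (i := .Y ⟨i, by omega⟩) (j := .q i) (Or.inl rfl)).symm
      (tgraph_adj_inner (i := .p i) (j := .q i) rfl).symm (hY _) (hp i)⟩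

lemma gadget_forced (hu : C uVert = 0) (hv : C vVert = 1)
    (h : C (baseVert e.1.1) = 0 ∨ C (baseVert e.1.2) = 0) :
    C (baseVert e.1.1) = 0 ∧ C (baseVert e.1.2) = 0 ∧ ∀ i, C (innerVert e c i) = ψI k i := by
  have hx : C (baseVert e.1.1) = 0 := h.elim id fun hy => (z'_half_forced e c hu hv hy).1
  obtain ⟨hy, hz⟩ := z_half_forced e c hu hv hx
  obtain ⟨hY, hp, hq⟩ := ladder_forced e c hu hv hx
  refine ⟨hx, hy, ?_⟩
  rintro (j | j | i | i | i)
  exacts [hz j, (z'_half_forced e c hu hv hy).2 j, hY i, hp i, hq i]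

lemma color_base_of_adj (hu : C uVert = 0) (hv : C vVert = 1) (c : Fin m) {a b : V}
    (hab : G.Adj a b) (h : C (baseVert a) = 0 ∨ C (baseVert b) = 0) : C (baseVert a) = 0 := by
  rcases hab.ne.lt_or_gt with hlt | hlt
  · exact (gadget_forced ⟨(a, b), hab, hlt⟩ c hu hv h).1
  · exact (gadget_forced ⟨(b, a), hab.symm, hlt⟩ c hu hv h.symm).2.1

end Gadget

theorem stmt17_general {V : Type*} [LinearOrder V] (G : SimpleGraph V)
    (k m : ℕ) (hm : 1 ≤ m)
    (hnoiso : ∀ a : V, ∃ b, G.Adj a b) :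
    (∀ p q, (Tgraph G k m).Adj p q → ψT G k m p ≠ ψT G k m q) ∧
    (∀ B : Set V, (∀ a b : V, G.Adj a b → a ∈ B ∨ b ∈ B) →
      ∀ σ : TVert G k m → Fin 3,
        (∀ p q, (Tgraph G k m).Adj p q → σ p ≠ σ q) →
        (∀ w ∈ B, σ (Sum.inl (Sum.inl w)) = ψT G k m (Sum.inl (Sum.inl w))) →
        σ (Sum.inl (Sum.inr false)) = ψT G k m (Sum.inl (Sum.inr false)) →
        σ (Sum.inl (Sum.inr true)) = ψT G k m (Sum.inl (Sum.inr true)) →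
        σ = ψT G k m) := by
  refine ⟨fun p q => ψT_adj_ne, fun B hB σ hσ hBσ hu hv => ?_⟩
  let C : (Tgraph G k m).Coloring (Fin 3) := SimpleGraph.Coloring.mk σ (hσ _ _)
  have hbase (w : V) : C (baseVert w) = 0 := by
    obtain ⟨b, hwb⟩ := hnoiso w
    exact color_base_of_adj hu hv ⟨0, hm⟩ hwb ((hB w b hwb).imp (hBσ w) (hBσ b))
  funext p
  rcases p with (w | _ | _) | ⟨e, c, i⟩
  exacts [hbase w, hu, hv, (gadget_forced e c hu hv (Or.inl (hbase _))).2.2 i]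

/-- Let `G` be a finite graph without isolated vertices, `k ≥ 2`, `m ≥ 1`, and let
`G̃` be obtained by attaching `m` copies of the gadget `F_k` to every edge of `G`.
Then `ψ₁` is a proper 3-coloring of `G̃`, and for every vertex cover `B` of `G`, `ψ₁`
is the unique proper 3-coloring of `G̃` agreeing with `ψ₁` on `B ∪ {u, v}`. -/
theorem stmt17 {V : Type*} [Fintype V] [LinearOrder V] (G : SimpleGraph V)
    (k m : ℕ) (hk : 2 ≤ k) (hm : 1 ≤ m)
    (hnoiso : ∀ a : V, ∃ b, G.Adj a b) :
    (∀ p q, (Tgraph G k m).Adj p q → ψT G k m p ≠ ψT G k m q) ∧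
    (∀ B : Set V, (∀ a b : V, G.Adj a b → a ∈ B ∨ b ∈ B) →
      ∀ σ : TVert G k m → Fin 3,
        (∀ p q, (Tgraph G k m).Adj p q → σ p ≠ σ q) →
        (∀ w ∈ B, σ (Sum.inl (Sum.inl w)) = ψT G k m (Sum.inl (Sum.inl w))) →
        σ (Sum.inl (Sum.inr false)) = ψT G k m (Sum.inl (Sum.inr false)) →
        σ (Sum.inl (Sum.inr true)) = ψT G k m (Sum.inl (Sum.inr true)) →
        σ = ψT G k m) :=
  stmt17_general G k m hm hnoiso
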